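/- arXiv:0903.2567 — 3 statements merged into one kernel-verified Lean document; each statement's English description precedes it below -/
import Mathlib

section
/- Let (X,0) be a pointed convex Boolean metric space over a Boolean ring B and x,y ∈ X. The following are equivalent: (1) x ⋆ y = 0; (2) Bx ∩ By = {0}; (3) d(x,y) = |x| ∨ |y|. -/
/-- The order on a Boolean ring: `a ≤ b` iff `a * b = a`. -/
def ble {B : Type} [BooleanRing B] (a b : B) : Prop := a * b = a

/-- The join on a Boolean ring: `a ∨ b = a + b + a * b`. -/
def bjoin {B : Type} [BooleanRing B] (a b : B) : B := a + b + a * b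

/-- A Boolean metric space over a Boolean ring `B`: `d x y = 0` iff `x = y`,
`d` is symmetric, and `d x z ≤ d x y ∨ d y z`. -/
structure BooleanMetric (B : Type) [BooleanRing B] (X : Type) where
  d : X → X → B
  d_eq_zero : ∀ x y, d x y = 0 ↔ x = y
  d_symm : ∀ x y, d x y = d y x
  d_tri : ∀ x y z, ble (d x z) (bjoin (d x y) (d y z))

/-- The coefficients `a i` have pairwise zero products. -/
def PairwiseOrthCoeffs {B : Type} [BooleanRing B] {k : ℕ} (a : Fin k → B) : Prop :=
  ∀ i j, i ≠ j → a i * a j = 0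

/-- `x` is a convex combination of `x₁, …, xₖ` with coefficients `a₁, …, aₖ`,
i.e. `aᵢ · d(x, xᵢ) = 0` for all `i`. -/
def IsConvComb {B X : Type} [BooleanRing B] (m : BooleanMetric B X) {k : ℕ}
    (a : Fin k → B) (xs : Fin k → X) (x : X) : Prop :=
  ∀ i, a i * m.d x (xs i) = 0

/-- A subset `S` is convex: every convex combination of points of `S` (with pairwise
disjoint coefficients summing to `1`) exists in `S`. -/
def IsConvexSubspace {B X : Type} [BooleanRing B] (m : BooleanMetric B X) (S : Set X) : Prop :=
  ∀ (k : ℕ) (a : Fin k → B) (xs : Fin k → X), (∀ i, xs i ∈ S) →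
    PairwiseOrthCoeffs a → (∑ i, a i) = 1 → ∃ x ∈ S, IsConvComb m a xs x

/-- A subset `S` is a CFG-space: it is convex and there are finitely many points of `S`
of which every point of `S` is a convex combination. -/
def IsCFGSubspace {B X : Type} [BooleanRing B] (m : BooleanMetric B X) (S : Set X) : Prop :=
  IsConvexSubspace m S ∧
  ∃ (k : ℕ) (xs : Fin k → X), (∀ i, xs i ∈ S) ∧
    ∀ x ∈ S, ∃ a : Fin k → B, PairwiseOrthCoeffs a ∧ (∑ i, a i) = 1 ∧ IsConvComb m a xs x

/-- A contractive map: `d(f x, f y) ≤ d(x, y)`. -/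
def Contractive {B X Y : Type} [BooleanRing B] (mX : BooleanMetric B X) (mY : BooleanMetric B Y)
    (f : X → Y) : Prop :=
  ∀ x y, ble (mY.d (f x) (f y)) (mX.d x y)

/-- `sm a x` is the convex combination `a x + (a+1) 0` of `x` and the base point `z`
with coefficients `a` and `a + 1`. -/
def IsScalarMul {B X : Type} [BooleanRing B] (m : BooleanMetric B X) (z : X)
    (sm : B → X → X) : Prop :=
  ∀ a x, a * m.d (sm a x) x = 0 ∧ (a + 1) * m.d (sm a x) z = 0

/-- `x ⊥ y`, i.e. `x ⋆ y = (d(x,y)+1) x = 0`. -/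
def Orth {B X : Type} [BooleanRing B] (m : BooleanMetric B X) (z : X) (sm : B → X → X)
    (x y : X) : Prop :=
  sm (m.d x y + 1) x = z

/-- `x` is the convex combination of `0, x₁, …, xₖ` with coefficients
`a₀ = 1 + a₁ + ⋯ + aₖ, a₁, …, aₖ`. -/
def ConvCombWithZero {B X : Type} [BooleanRing B] (m : BooleanMetric B X) (z : X) {k : ℕ}
    (a : Fin k → B) (xs : Fin k → X) (x : X) : Prop :=
  PairwiseOrthCoeffs a ∧ (∀ i, a i * m.d x (xs i) = 0) ∧ (1 + ∑ i, a i) * m.d x z = 0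

/-- `x₁, …, xₖ` is a referential of `(X, z)`: the `xᵢ` are nonzero, pairwise orthogonal,
and every point of `X` is a convex combination of `0, x₁, …, xₖ`. -/
def IsReferential {B X : Type} [BooleanRing B] (m : BooleanMetric B X) (z : X)
    (sm : B → X → X) {k : ℕ} (xs : Fin k → X) : Prop :=
  (∀ i, xs i ≠ z) ∧ (∀ i j, i ≠ j → Orth m z sm (xs i) (xs j)) ∧
  ∀ x : X, ∃ a : Fin k → B, ConvCombWithZero m z a xs x

/-- The whole space is a convex closure of the subset `S`: it is convex and every point
is a convex combination of points of `S`. -/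
def IsConvexClosure {B X : Type} [BooleanRing B] (m : BooleanMetric B X) (S : Set X) : Prop :=
  IsConvexSubspace m Set.univ ∧
  ∀ x : X, ∃ (k : ℕ) (a : Fin k → B) (xs : Fin k → X),
    (∀ i, xs i ∈ S) ∧ PairwiseOrthCoeffs a ∧ (∑ i, a i) = 1 ∧ IsConvComb m a xs x

/-- A finite set `R` is a referential of `(X, z)` (set version). -/
def IsReferentialSet {B X : Type} [BooleanRing B] (m : BooleanMetric B X) (z : X)
    (sm : B → X → X) (R : Finset X) : Prop :=
  z ∉ R ∧ (∀ x ∈ R, ∀ y ∈ R, x ≠ y → Orth m z sm x y) ∧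
  ∀ u : X, ∃ a : X → B,
    (∀ x ∈ R, ∀ y ∈ R, x ≠ y → a x * a y = 0) ∧
    (∀ x ∈ R, a x * m.d u x = 0) ∧ (1 + ∑ x ∈ R, a x) * m.d u z = 0


/-!
Since `ax` agrees with `x` on `a` and with `0` on `a + 1`, one gets `|ax| = a|x|`, and
`x ⋆ y = 0` just says `|x| ≤ d(x,y)`. Condition (3) is then the triangle inequality read
in Boolean-ring arithmetic. For (1) ⇒ (2): a common point `u = ax = by` has `|u| = ab|x|`,
while `ab · d(x,y) = 0` because `a` glues `u` to `x` and `b` glues `u` to `y`; as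
`|x| ≤ d(x,y)` this forces `|u| = 0`. For (2) ⇒ (1): `d(x,y) + 1` glues `x` to `y`, so
`x ⋆ y = (d(x,y) + 1) y` lies in `Bx ∩ By`.
-/

namespace BooleanMetric

variable {B X : Type} [BooleanRing B] (m : BooleanMetric B X)

theorem mul_d_eq_of_mul_d_eq_zero {c : B} {x y : X} (h : c * m.d x y = 0) (w : X) :
    c * m.d x w = c * m.d y w := by
  have hxw : m.d x w * (m.d x y + m.d y w + m.d x y * m.d y w) = m.d x w := m.d_tri x y w
  have hyw : m.d y w * (m.d y x + m.d x w + m.d y x * m.d x w) = m.d y w := m.d_tri y x w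
  rw [m.d_symm y x] at hyw
  linear_combination (-c) * hxw + c * hyw
    + (m.d x w + m.d x w * m.d y w - m.d y w - m.d y w * m.d x w) * h

theorem mul_d_eq_zero_trans {c : B} {x y w : X} (hxy : c * m.d x y = 0)
    (hyw : c * m.d y w = 0) : c * m.d x w = 0 :=
  (m.mul_d_eq_of_mul_d_eq_zero hxy w).trans hyw

end BooleanMetric

namespace IsScalarMul

variable {B X : Type} [BooleanRing B] {m : BooleanMetric B X} {z : X} {sm : B → X → X}

theorem eq_sm_of_mul_d_eq_zero (hsm : IsScalarMul m z sm) {a : B} {x u : X}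
    (hx : a * m.d u x = 0) (hz : (a + 1) * m.d u z = 0) : u = sm a x := by
  obtain ⟨hsx, hsz⟩ := hsm a x
  have ha : a * m.d u (sm a x) = 0 :=
    m.mul_d_eq_zero_trans hx (by rwa [m.d_symm])
  have ha' : (a + 1) * m.d u (sm a x) = 0 :=
    m.mul_d_eq_zero_trans hz (by rwa [m.d_symm])
  rw [← m.d_eq_zero]
  linear_combination ha' - ha

theorem d_base_sm (hsm : IsScalarMul m z sm) (a : B) (x : X) :
    m.d z (sm a x) = a * m.d z x := by
  obtain ⟨hsx, hsz⟩ := hsm a x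
  calc m.d z (sm a x) = a * m.d (sm a x) z := by
        rw [m.d_symm]; linear_combination -hsz + BooleanRing.add_self (m.d (sm a x) z)
    _ = a * m.d x z := m.mul_d_eq_of_mul_d_eq_zero hsx z
    _ = a * m.d z x := by rw [m.d_symm]

theorem sm_eq_base_iff (hsm : IsScalarMul m z sm) (a : B) (x : X) :
    sm a x = z ↔ a * m.d z x = 0 := by
  rw [← hsm.d_base_sm, m.d_eq_zero, eq_comm]

theorem base_eq_sm_zero (hsm : IsScalarMul m z sm) (x : X) : z = sm 0 x :=
  ((hsm.sm_eq_base_iff 0 x).mpr (zero_mul _)).symm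

theorem sm_eq_sm_of_mul_d_eq_zero (hsm : IsScalarMul m z sm) {c : B} {x y : X}
    (h : c * m.d x y = 0) : sm c x = sm c y :=
  hsm.eq_sm_of_mul_d_eq_zero (m.mul_d_eq_zero_trans (hsm c x).1 h) (hsm c x).2

theorem eq_base_of_sm_eq_sm (hsm : IsScalarMul m z sm) {a b : B} {x y : X}
    (horth : (m.d x y + 1) * m.d z x = 0) (hab : sm a x = sm b y) : sm a x = z := by
  have hdist : a * b * m.d x y = 0 := by
    have hx : a * b * m.d x (sm a x) = 0 := by
      rw [m.d_symm, mul_right_comm, (hsm a x).1, zero_mul]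
    rw [m.mul_d_eq_of_mul_d_eq_zero hx y, mul_assoc, hab, (hsm b y).1, mul_zero]
  have hnorm := hsm.d_base_sm b y
  rw [← hab, hsm.d_base_sm] at hnorm
  have horth' : m.d z x = m.d x y * m.d z x := by
    linear_combination horth - BooleanRing.add_self (m.d x y * m.d z x)
  rw [hsm.sm_eq_base_iff]
  calc a * m.d z x = b * (a * m.d z x) := by rw [hnorm, ← mul_assoc, BooleanRing.mul_self]
    _ = a * b * m.d x y * m.d z x := by nth_rw 1 [horth']; ring
    _ = 0 := by rw [hdist, zero_mul]

end IsScalarMul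

theorem add_one_mul_eq_zero_iff_eq_bjoin {B : Type} [BooleanRing B] {p q e : B}
    (hq : ble q (bjoin p e)) (he : ble e (bjoin p q)) :
    (e + 1) * p = 0 ↔ e = bjoin p q := by
  unfold ble bjoin at *
  constructor
  · intro horth
    have hpe : p * e = p := by linear_combination BooleanRing.add_self (p * e) - horth
    have hqe : q * e = q := by
      linear_combination hq - q * hpe - BooleanRing.add_self (q * p)
    linear_combination (1 + q) * hpe + hqe - he
  · intro heq
    linear_combination p * heq + (1 + q) * BooleanRing.mul_self p + BooleanRing.add_self p
      + BooleanRing.add_self (p * q)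

theorem stmt7_general {B X : Type} [BooleanRing B] (m : BooleanMetric B X)
    (z : X)
    (sm : B → X → X) (hsm : IsScalarMul m z sm) (x y : X) :
    (sm (m.d x y + 1) x = z ↔
      {u : X | ∃ a : B, u = sm a x} ∩ {u : X | ∃ a : B, u = sm a y} = {z}) ∧
    (sm (m.d x y + 1) x = z ↔ m.d x y = bjoin (m.d z x) (m.d z y)) := by
  rw [hsm.sm_eq_base_iff]
  refine ⟨⟨fun horth => ?_, fun hinter => ?_⟩, ?_⟩
  · ext u
    simp only [Set.mem_inter_iff, Set.mem_ofPred_eq, Set.mem_singleton_iff]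
    refine ⟨?_, fun hu => ⟨⟨0, hu ▸ hsm.base_eq_sm_zero x⟩, ⟨0, hu ▸ hsm.base_eq_sm_zero y⟩⟩⟩
    rintro ⟨⟨a, rfl⟩, ⟨b, hab⟩⟩
    exact hsm.eq_base_of_sm_eq_sm horth hab
  · have hglue : (m.d x y + 1) * m.d x y = 0 := by
      rw [add_mul, BooleanRing.mul_self, one_mul, BooleanRing.add_self]
    have hmem : sm (m.d x y + 1) x ∈ ({z} : Set X) :=
      hinter ▸ ⟨⟨_, rfl⟩, ⟨_, hsm.sm_eq_sm_of_mul_d_eq_zero hglue⟩⟩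
    exact (hsm.sm_eq_base_iff _ x).mp hmem
  · refine add_one_mul_eq_zero_iff_eq_bjoin (m.d_tri z x y) ?_
    simpa only [m.d_symm x z] using m.d_tri x z y

/-- In a pointed convex Boolean metric space, for `x, y`, the following are equivalent:
(1) `x ⋆ y = 0`; (2) `Bx ∩ By = {0}`; (3) `d(x,y) = |x| ∨ |y|`. -/
theorem stmt7 {B X : Type} [BooleanRing B] (m : BooleanMetric B X)
    (hconv : IsConvexSubspace m Set.univ) (z : X)
    (sm : B → X → X) (hsm : IsScalarMul m z sm) (x y : X) :
    (sm (m.d x y + 1) x = z ↔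
      {u : X | ∃ a : B, u = sm a x} ∩ {u : X | ∃ a : B, u = sm a y} = {z}) ∧
    (sm (m.d x y + 1) x = z ↔ m.d x y = bjoin (m.d z x) (m.d z y)) :=
  stmt7_general m z sm hsm x y
end

section
/- Let X be a CFG-space over a Boolean ring B and Y ⊆ X. Then Y, with the restricted metric, is a CFG-space if and only if there exists a contractive map f : X → B (where B carries the metric d(a,b) = a + b) such that Y = f⁻¹(0). -/
/-!
If `Y` is generated by `y₁, …, yₖ`, then `f x = ∏ᵢ d(x, yᵢ)` is contractive and vanishes on `Y`.
Conversely, where `f x = 0` the coefficients `aᵢ = (1 + d(x, yᵢ)) ∏_{j<i} d(x, yⱼ)` partition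
unity, and the convex combination of the `yᵢ` with these coefficients lies in `Y` and equals `x`.

For the other direction, a contractive `f : X → B` satisfies `a f(x) = a f(y)` whenever
`a d(x, y) = 0`, so its zero set is convex. Moving each generator `xᵢ` of `X` into the zero
set (keep it on `1 + f(xᵢ)`, replace it by a fixed zero of `f` on `f(xᵢ)`) gives generators of it.
-/

section BooleanRing

variable {B : Type} [BooleanRing B]

lemma ble_add {u v w : B} (hu : ble u w) (hv : ble v w) : ble (u + v) w := by
  unfold ble at *
  rw [add_mul, hu, hv]

lemma ble_mul_left {u w : B} (v : B) (h : ble u w) : ble (v * u) w := by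
  unfold ble at *
  rw [mul_assoc, h]

lemma ble_add_bjoin (u v : B) : ble (u + v) (bjoin u v) := by
  unfold ble bjoin
  linear_combination (1 + v) * BooleanRing.mul_self u + (1 + u) * BooleanRing.mul_self v
    + 2 * BooleanRing.add_self (u * v)

lemma one_add_mul_self_eq_zero (c : B) : (1 + c) * c = 0 := by
  rw [mul_comm, BooleanRing.mul_one_add_self]

lemma eq_zero_of_sum_eq_one_of_mul_eq_zero {R ι : Type*} [Semiring R] {s : Finset ι}
    {a : ι → R} {b : R} (hsum : ∑ i ∈ s, a i = 1) (h : ∀ i ∈ s, a i * b = 0) : b = 0 := by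
  rw [← one_mul b, ← hsum, Finset.sum_mul]
  exact Finset.sum_eq_zero h

lemma exists_pairwiseOrthCoeffs_sum_eq_one_add_prod {k : ℕ} (g : Fin k → B) :
    ∃ a : Fin k → B, PairwiseOrthCoeffs a ∧ ∑ i, a i = 1 + ∏ i, g i ∧ ∀ i, a i * g i = 0 := by
  induction k with
  | zero => exact ⟨Fin.elim0, fun i => i.elim0, by simp [BooleanRing.add_self], fun i => i.elim0⟩
  | succ k ih =>
    obtain ⟨a, horth, hsum, hann⟩ := ih fun i => g i.succ
    refine ⟨Fin.cons (1 + g 0) fun i => g 0 * a i, ?_, ?_, ?_⟩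
    · intro i j hij
      cases i using Fin.cases <;> cases j using Fin.cases
      · exact absurd rfl hij
      · simp only [Fin.cons_zero, Fin.cons_succ]
        rw [← mul_assoc, one_add_mul_self_eq_zero (g 0), zero_mul]
      · simp only [Fin.cons_zero, Fin.cons_succ]
        rw [mul_comm, ← mul_assoc, one_add_mul_self_eq_zero (g 0), zero_mul]
      · simp only [Fin.cons_succ]
        rw [mul_mul_mul_comm, horth _ _ fun h => hij (congrArg _ h), mul_zero]
    · rw [Fin.sum_univ_succ, Fin.prod_univ_succ]
      simp only [Fin.cons_zero, Fin.cons_succ]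
      rw [← Finset.mul_sum, hsum]
      linear_combination BooleanRing.add_self (g 0)
    · intro i
      cases i using Fin.cases
      · exact one_add_mul_self_eq_zero (g 0)
      · simp only [Fin.cons_succ]
        rw [mul_assoc, hann, mul_zero]

end BooleanRing

def ringMetric (B : Type) [BooleanRing B] : BooleanMetric B B where
  d a b := a + b
  d_eq_zero := BooleanRing.add_eq_zero'
  d_symm := add_comm
  d_tri a b c := by
    have h : a + c = (a + b) + (b + c) := by
      linear_combination -BooleanRing.add_self b
    show ble (a + c) _
    rw [h]
    exact ble_add_bjoin _ _

namespace BooleanMetric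

variable {B X : Type} [BooleanRing B] (m : BooleanMetric B X)

lemma d_self (x : X) : m.d x x = 0 := (m.d_eq_zero x x).2 rfl

lemma mul_d_eq_zero_trans_s14 {a : B} {x y p : X} (h₁ : a * m.d x y = 0)
    (h₂ : a * m.d y p = 0) : a * m.d x p = 0 := by
  have t := m.d_tri x y p
  unfold ble bjoin at t
  linear_combination (-a) * t + m.d x p * h₁ + (m.d x p + m.d x p * m.d x y) * h₂

lemma contractive_d (z : X) : Contractive m (ringMetric B) fun x => m.d x z := by
  intro x y
  have t₁ := m.d_tri x y z
  have t₂ := m.d_tri y x z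
  show (m.d x z + m.d y z) * m.d x y = m.d x z + m.d y z
  unfold ble bjoin at *
  rw [m.d_symm y x] at t₂
  linear_combination t₁ + t₂ - BooleanRing.add_self (m.d x z * m.d y z * (1 + m.d x y))

end BooleanMetric

namespace Contractive

variable {B X : Type} [BooleanRing B] {m : BooleanMetric B X} {f g : X → B}

lemma one : Contractive m (ringMetric B) 1 := by
  intro x y
  show (1 + 1) * m.d x y = 1 + 1
  rw [BooleanRing.add_self, zero_mul]

lemma mul (hf : Contractive m (ringMetric B) f) (hg : Contractive m (ringMetric B) g) :
    Contractive m (ringMetric B) (f * g) := by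
  intro x y
  have h : f x * g x + f y * g y = f x * (g x + g y) + g y * (f x + f y) := by
    linear_combination -BooleanRing.add_self (f x * g y)
  show ble (f x * g x + f y * g y) _
  rw [h]
  exact ble_add (ble_mul_left _ (hg x y)) (ble_mul_left _ (hf x y))

lemma prod {ι : Type*} (s : Finset ι) {F : ι → X → B}
    (hF : ∀ i ∈ s, Contractive m (ringMetric B) (F i)) :
    Contractive m (ringMetric B) fun x => ∏ i ∈ s, F i x := by
  simpa only [← Finset.prod_apply] using Finset.prod_induction F _ (fun _ _ => mul) one hF

lemma mul_eq_mul_of_mul_d_eq_zero (hf : Contractive m (ringMetric B) f) {a : B} {x y : X}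
    (h : a * m.d x y = 0) : a * f x = a * f y := by
  have t : (f x + f y) * m.d x y = f x + f y := hf x y
  linear_combination (f x + f y) * h - a * t - BooleanRing.add_self (a * f y)

end Contractive

section CFG

variable {B X : Type} [BooleanRing B] {m : BooleanMetric B X}

lemma IsConvexSubspace.exists_convComb_two {S : Set X} (hS : IsConvexSubspace m S) {x y : X}
    (hx : x ∈ S) (hy : y ∈ S) (c : B) :
    ∃ z ∈ S, (1 + c) * m.d z x = 0 ∧ c * m.d z y = 0 := by
  have horth : PairwiseOrthCoeffs ![1 + c, c] := by
    intro i j hij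
    fin_cases i <;> fin_cases j <;> simp [one_add_mul_self_eq_zero, mul_comm c] at hij ⊢
  obtain ⟨z, hz, hzc⟩ := hS 2 ![1 + c, c] ![x, y] (by simp [Fin.forall_fin_two, hx, hy]) horth
    (by simp [add_assoc, BooleanRing.add_self])
  exact ⟨z, hz, hzc 0, hzc 1⟩

theorem exists_contractive_of_isCFGSubspace {Y : Set X} (hY : IsCFGSubspace m Y) :
    ∃ f : X → B, Contractive m (ringMetric B) f ∧ Y = f ⁻¹' {0} := by
  obtain ⟨hconv, k, ys, hysY, hgen⟩ := hY
  have hf : Contractive m (ringMetric B) fun x => ∏ i, m.d x (ys i) :=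
    Contractive.prod _ fun i _ => m.contractive_d (ys i)
  refine ⟨_, hf, Set.ext fun x => ⟨fun hx => ?_, fun hx => ?_⟩⟩
  · obtain ⟨a, -, hsum, hcc⟩ := hgen x hx
    refine eq_zero_of_sum_eq_one_of_mul_eq_zero hsum fun i _ => ?_
    rw [hf.mul_eq_mul_of_mul_d_eq_zero (hcc i),
      Finset.prod_eq_zero (Finset.mem_univ i) (m.d_self _), mul_zero]
  · obtain ⟨a, horth, hsum, hann⟩ :=
      exists_pairwiseOrthCoeffs_sum_eq_one_add_prod fun i => m.d x (ys i)
    rw [show ∏ i, m.d x (ys i) = 0 from hx, add_zero] at hsum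
    obtain ⟨p, hp, hpc⟩ := hconv k a ys hysY horth hsum
    have hxp : m.d x p = 0 := eq_zero_of_sum_eq_one_of_mul_eq_zero hsum fun i _ =>
      m.mul_d_eq_zero_trans_s14 (hann i) (by rw [m.d_symm]; exact hpc i)
    rwa [(m.d_eq_zero x p).1 hxp]

theorem isConvexSubspace_preimage_zero (hX : IsConvexSubspace m Set.univ) {f : X → B}
    (hf : Contractive m (ringMetric B) f) : IsConvexSubspace m (f ⁻¹' {0}) := by
  intro k a zs hzs horth hsum
  obtain ⟨x, -, hx⟩ := hX k a zs (fun _ => trivial) horth hsum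
  refine ⟨x, eq_zero_of_sum_eq_one_of_mul_eq_zero hsum fun i _ => ?_, hx⟩
  rw [hf.mul_eq_mul_of_mul_d_eq_zero (hx i), show f (zs i) = 0 from hzs i, mul_zero]

theorem isCFGSubspace_preimage_zero (hX : IsCFGSubspace m Set.univ) {f : X → B}
    (hf : Contractive m (ringMetric B) f) : IsCFGSubspace m (f ⁻¹' {0}) := by
  obtain ⟨hconv, k, xs, -, hgen⟩ := hX
  refine ⟨isConvexSubspace_preimage_zero hconv hf, ?_⟩
  rcases (f ⁻¹' {0}).eq_empty_or_nonempty with hY | ⟨y₀, hy₀⟩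
  · exact ⟨0, Fin.elim0, fun i => i.elim0, by simp [hY]⟩
  -- `ys i` agrees with `xs i` where `f (xs i)` vanishes and with `y₀` elsewhere
  choose ys _ hys₁ hys₂ using fun i =>
    hconv.exists_convComb_two (Set.mem_univ (xs i)) (Set.mem_univ y₀) (f (xs i))
  have hysY : ∀ i, f (ys i) = 0 := fun i => by
    have h₁ := hf.mul_eq_mul_of_mul_d_eq_zero (hys₁ i)
    have h₂ := hf.mul_eq_mul_of_mul_d_eq_zero (hys₂ i)
    rw [show f y₀ = 0 from hy₀, mul_zero] at h₂
    rw [mul_comm, one_add_mul_self_eq_zero] at h₁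
    linear_combination h₁ + h₂ - BooleanRing.add_self (f (xs i) * f (ys i))
  refine ⟨k, ys, hysY, fun y hy => ?_⟩
  obtain ⟨a, horth, hsum, hcc⟩ := hgen y trivial
  refine ⟨a, horth, hsum, fun i => m.mul_d_eq_zero_trans_s14 (hcc i) ?_⟩
  have hax : a i * f (xs i) = 0 := by
    rw [← hf.mul_eq_mul_of_mul_d_eq_zero (hcc i), show f y = 0 from hy, mul_zero]
  have hxy : (1 + f (xs i)) * m.d (xs i) (ys i) = 0 := by rw [m.d_symm]; exact hys₁ i
  linear_combination a i * hxy - m.d (xs i) (ys i) * hax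

end CFG

/-- A subset `Y` of a CFG-space `X` is a CFG-space iff it is the zero set of a
contractive map `f : X → B`, where `B` carries the metric `d(a,b) = a + b`. -/
theorem stmt14 {B X : Type} [BooleanRing B] (m : BooleanMetric B X)
    (hX : IsCFGSubspace m Set.univ) (Y : Set X) :
    IsCFGSubspace m Y ↔
    ∃ f : X → B, (∀ x y, ble (f x + f y) (m.d x y)) ∧ Y = f ⁻¹' {0} := by
  constructor
  · exact exists_contractive_of_isCFGSubspace
  · rintro ⟨f, hf, rfl⟩
    exact isCFGSubspace_preimage_zero hX hf
end

section
/- Let X be a nonempty CFG-space over a Boolean ring B and f : X → B a contractive map, where B carries the metric d(a,b) = a + b. Then there exists u ∈ X such that f(x) ≤ f(u) for all x ∈ X (i.e., f attains a maximum on X in the order a ≤ b ⟺ ab = a). -/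
/-! A contraction `f : X → B` satisfies `a * f x = a * f y` whenever `a * d(x, y) = 0`, so
`f` sends a convex combination with coefficients `aᵢ` to `∑ aᵢ f(xᵢ)`. In particular the
combination of `u` and `v` with coefficients `f u` and `1 + f u` has value `f u ∨ f v`;
iterating this over the finitely many generators gives a point `u` whose value dominates
every `f(xᵢ)`, hence every `∑ aᵢ f(xᵢ)`, since a sum of elements below `f u` in a Boolean
ring is again below `f u`. -/

section BooleanOrder

variable {B : Type} [BooleanRing B]

lemma ble_trans {a b c : B} (hab : ble a b) (hbc : ble b c) : ble a c := by
  unfold ble at *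
  rw [← hab, mul_assoc, hbc]

lemma ble_bjoin_left (a b : B) : ble a (bjoin a b) := by
  unfold ble bjoin
  linear_combination (1 + b) * BooleanRing.mul_self a + a * b * BooleanRing.add_self (1 : B)

lemma ble_bjoin_right (a b : B) : ble b (bjoin a b) := by
  unfold ble bjoin
  linear_combination (1 + a) * BooleanRing.mul_self b + a * b * BooleanRing.add_self (1 : B)

lemma ble_mul_left_s17 {b c : B} (a : B) (h : ble b c) : ble (a * b) c := by
  unfold ble at *
  rw [mul_assoc, h]

lemma ble_sum {ι : Type} {s : Finset ι} {g : ι → B} {c : B} (h : ∀ i ∈ s, ble (g i) c) :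
    ble (∑ i ∈ s, g i) c := by
  unfold ble at *
  rw [Finset.sum_mul]
  exact Finset.sum_congr rfl h

end BooleanOrder

section Contraction

variable {B X : Type} [BooleanRing B] {m : BooleanMetric B X} {f : X → B}

lemma mul_apply_eq_of_mul_d_eq_zero (hf : ∀ x y, ble (f x + f y) (m.d x y)) {a : B} {x y : X}
    (h : a * m.d x y = 0) : a * f x = a * f y := by
  have hkill : a * (f x + f y) = 0 := by
    rw [← hf x y, mul_left_comm, h, mul_zero]
  rwa [mul_add, BooleanRing.add_eq_zero'] at hkill

lemma apply_eq_sum_of_isConvComb (hf : ∀ x y, ble (f x + f y) (m.d x y)) {k : ℕ}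
    {a : Fin k → B} {xs : Fin k → X} {x : X} (hsum : ∑ i, a i = 1)
    (hx : IsConvComb m a xs x) : f x = ∑ i, a i * f (xs i) := by
  calc f x = (∑ i, a i) * f x := by rw [hsum, one_mul]
    _ = ∑ i, a i * f (xs i) := by
      rw [Finset.sum_mul]
      exact Finset.sum_congr rfl fun i _ => mul_apply_eq_of_mul_d_eq_zero hf (hx i)

lemma exists_convComb_pair (hconv : IsConvexSubspace m Set.univ) (e : B) (u v : X) :
    ∃ w, e * m.d w u = 0 ∧ (1 + e) * m.d w v = 0 := by
  have horth : PairwiseOrthCoeffs ![e, 1 + e] := by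
    intro i j hij
    have he : e * (1 + e) = 0 := BooleanRing.mul_one_add_self e
    fin_cases i <;> fin_cases j <;> simp_all [mul_comm]
  have hsum : ∑ i, ![e, 1 + e] i = 1 := by
    simp only [Fin.sum_univ_two, Matrix.cons_val_zero, Matrix.cons_val_one]
    linear_combination BooleanRing.add_self e
  obtain ⟨w, -, hw⟩ := hconv 2 ![e, 1 + e] ![u, v] (fun _ => Set.mem_univ _) horth hsum
  exact ⟨w, hw 0, hw 1⟩

lemma exists_apply_eq_bjoin (hconv : IsConvexSubspace m Set.univ)
    (hf : ∀ x y, ble (f x + f y) (m.d x y)) (u v : X) : ∃ w, f w = bjoin (f u) (f v) := by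
  obtain ⟨w, hwu, hwv⟩ := exists_convComb_pair hconv (f u) u v
  refine ⟨w, ?_⟩
  have hu := mul_apply_eq_of_mul_d_eq_zero hf hwu
  have hv := mul_apply_eq_of_mul_d_eq_zero hf hwv
  unfold bjoin
  linear_combination hu + hv - BooleanRing.add_self (f u * f w) + BooleanRing.mul_self (f u)

lemma exists_forall_ble_of_finset [Nonempty X] (hconv : IsConvexSubspace m Set.univ)
    (hf : ∀ x y, ble (f x + f y) (m.d x y)) (s : Finset X) :
    ∃ u, ∀ x ∈ s, ble (f x) (f u) := by
  classical
  induction s using Finset.induction_on with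
  | empty => exact ⟨Classical.arbitrary X, by simp⟩
  | insert y s _ ih =>
    obtain ⟨u, hu⟩ := ih
    obtain ⟨w, hw⟩ := exists_apply_eq_bjoin hconv hf y u
    refine ⟨w, fun x hx => ?_⟩
    rw [hw]
    rcases Finset.mem_insert.mp hx with rfl | hx
    · exact ble_bjoin_left _ _
    · exact ble_trans (hu x hx) (ble_bjoin_right _ _)

end Contraction

/-- A contractive map from a nonempty CFG-space to `B` (with the metric `d(a,b) = a+b`)
attains a maximum. -/
theorem stmt17 {B X : Type} [BooleanRing B] (m : BooleanMetric B X)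
    (hne : Nonempty X) (hX : IsCFGSubspace m Set.univ)
    (f : X → B) (hf : ∀ x y, ble (f x + f y) (m.d x y)) :
    ∃ u : X, ∀ x : X, ble (f x) (f u) := by
  classical
  obtain ⟨hconv, k, xs, -, hgen⟩ := hX
  obtain ⟨u, hu⟩ := exists_forall_ble_of_finset hconv hf (Finset.univ.image xs)
  refine ⟨u, fun x => ?_⟩
  have hxs : ∀ i, ble (f (xs i)) (f u) := fun i =>
    hu _ (Finset.mem_image_of_mem xs (Finset.mem_univ i))
  obtain ⟨a, -, hsum, hx⟩ := hgen x (Set.mem_univ x)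
  rw [apply_eq_sum_of_isConvComb hf hsum hx]
  exact ble_sum fun i _ => ble_mul_left_s17 (a i) (hxs i)
end
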